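/- Let a_{ij}, b_{ij} (1 ≤ i,j ≤ 2) be real numbers satisfying (a_{11}−a_{21})(a_{22}−a_{12}) > 0 and (b_{11}−b_{12})(b_{22}−b_{21}) > 0. Set s = (a_{11}−a_{21}+a_{22}−a_{12})(b_{11}−b_{12}+b_{22}−b_{21}) and define the 2×2 matrix N̂ with entries N̂_{11} = (b_{22}−b_{21})(a_{22}−a_{12})/s, N̂_{12} = (b_{22}−b_{21})(a_{11}−a_{21})/s, N̂_{21} = (b_{11}−b_{12})(a_{22}−a_{12})/s, N̂_{22} = (b_{11}−b_{12})(a_{11}−a_{21})/s. Then N̂ has positive entries summing to 1, satisfies N̂_{11}N̂_{22} = N̂_{12}N̂_{21}, and satisfies f_1(N̂) = f_2(N̂) = 0; moreover N̂ is the unique 2×2 matrix P with positive entries summing to 1 such that p_{11}p_{22} = p_{12}p_{21} and f_1(P) = f_2(P) = 0. (N̂ is the unique totally mixed Nash equilibrium of the game.) -/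

import Mathlib

/-!
A rank-one probability matrix `P` is the outer product `r cᵀ` of its row sums `r` and column
sums `c`, and on such a matrix the Spohn determinant factors as
`f₁(P) = r₁ r₂ (c₁ + c₂) ((a₂₂ - a₁₂) c₂ - (a₁₁ - a₂₁) c₁)`.
So for totally mixed `P`, `f₁(P) = 0` is the indifference equation `(a₁₁ - a₂₁) c₁ = (a₂₂ - a₁₂) c₂`,
which with `c₁ + c₂ = 1` forces `c = (a₂₂ - a₁₂, a₁₁ - a₂₁) / (a₁₁ - a₂₁ + a₂₂ - a₁₂)`, a positive
vector by the sign condition on `a`. Symmetrically `f₂(P) = 0` pins down `r`, and `N̂ = r cᵀ`.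
-/

/-- `f₁(a, P)`. The second Spohn determinant is `f₂(b, P) = f₁(bᵀ, Pᵀ)`, that is
`spohnDet b11 b21 b12 b22 p11 p21 p12 p22`. -/
def spohnDet {R : Type*} [CommRing R] (a11 a12 a21 a22 p11 p12 p21 p22 : R) : R :=
  (p11 + p12) * (a21 * p21 + a22 * p22) - (a11 * p11 + a12 * p12) * (p21 + p22)

section CommRing

variable {R : Type*} [CommRing R]

theorem spohnDet_outer (a11 a12 a21 a22 r1 r2 c1 c2 : R) :
    spohnDet a11 a12 a21 a22 (r1 * c1) (r1 * c2) (r2 * c1) (r2 * c2)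
      = r1 * r2 * (c1 + c2) * ((a22 - a12) * c2 - (a11 - a21) * c1) := by
  unfold spohnDet
  ring

theorem spohnDet_outer_eq_zero (a11 a12 a21 a22 r1 r2 : R) {c1 c2 : R}
    (h : (a11 - a21) * c1 = (a22 - a12) * c2) :
    spohnDet a11 a12 a21 a22 (r1 * c1) (r1 * c2) (r2 * c1) (r2 * c2) = 0 := by
  rw [spohnDet_outer]
  linear_combination -(r1 * r2 * (c1 + c2)) * h

theorem eq_outer_of_rank_one {p11 p12 p21 p22 : R}
    (hsum : p11 + p12 + p21 + p22 = 1) (hrank : p11 * p22 = p12 * p21) :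
    p11 = (p11 + p12) * (p11 + p21) ∧ p12 = (p11 + p12) * (p12 + p22) ∧
      p21 = (p21 + p22) * (p11 + p21) ∧ p22 = (p21 + p22) * (p12 + p22) := by
  refine ⟨?_, ?_, ?_, ?_⟩
  · linear_combination -p11 * hsum + hrank
  · linear_combination -p12 * hsum - hrank
  · linear_combination -p21 * hsum - hrank
  · linear_combination -p22 * hsum + hrank

end CommRing

theorem eq_div_add_of_mul_eq_mul {K : Type*} [Field K] {α β x y : K} (hαβ : α + β ≠ 0)
    (hxy : x + y = 1) (h : α * x = β * y) : x = β / (α + β) ∧ y = α / (α + β) := by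
  constructor <;> rw [eq_div_iff hαβ]
  · linear_combination h + β * hxy
  · linear_combination -h + α * hxy

section LinearOrderedField

variable {K : Type*} [Field K] [LinearOrder K] [IsStrictOrderedRing K]

theorem add_ne_zero_of_mul_pos {α β : K} (h : 0 < α * β) : α + β ≠ 0 := by
  intro hsum
  have h' : α * β = -(α * α) := by linear_combination α * hsum
  nlinarith [mul_self_nonneg α]

theorem indifference_mix {α β : K} (h : 0 < α * β) :
    0 < β / (α + β) ∧ 0 < α / (α + β) ∧ β / (α + β) + α / (α + β) = 1 ∧
      α * (β / (α + β)) = β * (α / (α + β)) := by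
  refine ⟨?_, ?_, ?_, by ring⟩
  · rcases pos_and_pos_or_neg_and_neg_of_mul_pos h with ⟨hα, hβ⟩ | ⟨hα, hβ⟩
    · positivity
    · exact div_pos_of_neg_of_neg hβ (by linarith)
  · rcases pos_and_pos_or_neg_and_neg_of_mul_pos h with ⟨hα, hβ⟩ | ⟨hα, hβ⟩
    · positivity
    · exact div_pos_of_neg_of_neg hα (by linarith)
  · rw [← add_div, add_comm β, div_self (add_ne_zero_of_mul_pos h)]

theorem col_sums_eq_of_spohnDet_eq_zero {a11 a12 a21 a22 p11 p12 p21 p22 : K}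
    (ha : 0 < (a11 - a21) * (a22 - a12)) (hpos : 0 < p11 ∧ 0 < p12 ∧ 0 < p21 ∧ 0 < p22)
    (hsum : p11 + p12 + p21 + p22 = 1) (hrank : p11 * p22 = p12 * p21)
    (hf : spohnDet a11 a12 a21 a22 p11 p12 p21 p22 = 0) :
    p11 + p21 = (a22 - a12) / (a11 - a21 + (a22 - a12)) ∧
      p12 + p22 = (a11 - a21) / (a11 - a21 + (a22 - a12)) := by
  obtain ⟨hp11, hp12, hp21, hp22⟩ := hpos
  obtain ⟨h11, h12, h21, h22⟩ := eq_outer_of_rank_one hsum hrank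
  have hf' := spohnDet_outer a11 a12 a21 a22 (p11 + p12) (p21 + p22) (p11 + p21) (p12 + p22)
  rw [← h11, ← h12, ← h21, ← h22, hf] at hf'
  have hindiff : (a22 - a12) * (p12 + p22) - (a11 - a21) * (p11 + p21) = 0 :=
    (mul_eq_zero.mp hf'.symm).resolve_left (by positivity)
  exact eq_div_add_of_mul_eq_mul (add_ne_zero_of_mul_pos ha) (by linear_combination hsum)
    (by linear_combination -hindiff)

end LinearOrderedField

theorem nash_point_unique_totally_mixed
    (a11 a12 a21 a22 b11 b12 b21 b22 : ℝ)
    (ha : 0 < (a11 - a21) * (a22 - a12))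
    (hb : 0 < (b11 - b12) * (b22 - b21))
    (s N11 N12 N21 N22 : ℝ)
    (hs : s = (a11 - a21 + a22 - a12) * (b11 - b12 + b22 - b21))
    (h11 : N11 = (b22 - b21) * (a22 - a12) / s)
    (h12 : N12 = (b22 - b21) * (a11 - a21) / s)
    (h21 : N21 = (b11 - b12) * (a22 - a12) / s)
    (h22 : N22 = (b11 - b12) * (a11 - a21) / s) :
    (0 < N11 ∧ 0 < N12 ∧ 0 < N21 ∧ 0 < N22) ∧
    N11 + N12 + N21 + N22 = 1 ∧
    N11 * N22 = N12 * N21 ∧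
    (N11 + N12) * (a21 * N21 + a22 * N22)
      - (a11 * N11 + a12 * N12) * (N21 + N22) = 0 ∧
    (N11 + N21) * (b12 * N12 + b22 * N22)
      - (b11 * N11 + b21 * N21) * (N12 + N22) = 0 ∧
    (∀ p11 p12 p21 p22 : ℝ,
      (0 < p11 ∧ 0 < p12 ∧ 0 < p21 ∧ 0 < p22) →
      p11 + p12 + p21 + p22 = 1 →
      p11 * p22 = p12 * p21 →
      (p11 + p12) * (a21 * p21 + a22 * p22)
        - (a11 * p11 + a12 * p12) * (p21 + p22) = 0 →
      (p11 + p21) * (b12 * p12 + b22 * p22)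
        - (b11 * p11 + b21 * p21) * (p12 + p22) = 0 →
      p11 = N11 ∧ p12 = N12 ∧ p21 = N21 ∧ p22 = N22) := by
  obtain ⟨hc1, hc2, hc, hcol⟩ := indifference_mix ha
  obtain ⟨hr1, hr2, hr, hrow⟩ := indifference_mix hb
  set c1 := (a22 - a12) / (a11 - a21 + (a22 - a12))
  set c2 := (a11 - a21) / (a11 - a21 + (a22 - a12))
  set r1 := (b22 - b21) / (b11 - b12 + (b22 - b21))
  set r2 := (b11 - b12) / (b11 - b12 + (b22 - b21))
  obtain ⟨rfl, rfl, rfl, rfl⟩ : N11 = r1 * c1 ∧ N12 = r1 * c2 ∧ N21 = r2 * c1 ∧ N22 = r2 * c2 := by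
    subst_vars
    refine ⟨?_, ?_, ?_, ?_⟩ <;> rw [div_mul_div_comm] <;> ring
  refine ⟨⟨by positivity, by positivity, by positivity, by positivity⟩,
    by linear_combination (r1 + r2) * hc + hr, by ring, spohnDet_outer_eq_zero _ _ _ _ _ _ hcol,
    ?_, ?_⟩
  · have h := spohnDet_outer_eq_zero b11 b21 b12 b22 c1 c2 hrow
    rwa [mul_comm c1 r1, mul_comm c1 r2, mul_comm c2 r1, mul_comm c2 r2] at h
  · rintro p11 p12 p21 p22 ⟨hp11, hp12, hp21, hp22⟩ hsum hrank hf1 hf2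
    obtain ⟨hcol1, hcol2⟩ :=
      col_sums_eq_of_spohnDet_eq_zero ha ⟨hp11, hp12, hp21, hp22⟩ hsum hrank hf1
    obtain ⟨hrow1, hrow2⟩ := col_sums_eq_of_spohnDet_eq_zero hb ⟨hp11, hp21, hp12, hp22⟩
      (by linear_combination hsum) (by linear_combination hrank) hf2
    obtain ⟨h11, h12, h21, h22⟩ := eq_outer_of_rank_one hsum hrank
    simp only [hcol1, hcol2, hrow1, hrow2] at h11 h12 h21 h22
    exact ⟨h11, h12, h21, h22⟩
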